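/- arXiv:1405.2879 — 2 statements merged into one kernel-verified Lean document; each statement's English description precedes it below -/
import Mathlib

section
/- Let X be a finite nonempty set. Let C be a symmetric X-by-X matrix with nonnegative real entries and zero diagonal, let κ : X → ℝ be nonnegative, and set \(\lambda_x = \sum_y C_{x,y} + \kappa_x\). Assume \(A = \mathrm{diag}(\lambda) - C\) is positive definite. Then for every X-by-X Hermitian matrix Z with \(|Z_{x,y}| \le 1\) for all x, y, the Hermitian matrix \(A^{Z}\) with entries \(A^{Z}_{x,y} = \lambda_x \delta_{x,y} - C_{x,y} Z_{x,y}\) is positive definite. -/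
/-! Write `g = (‖v x‖)_x` for a vector `v ≠ 0`. Termwise, `Re (conj v_x · A^Z_{xy} · v_y) ≥ g_x A_{xy} g_y`:
on the diagonal the two entries have the same real part up to `C_xx (1 - Re Z_xx) ≥ 0`, and off the
diagonal `|C_xy Z_xy| ≤ C_xy = -A_xy`. Hence `Re (v* A^Z v) ≥ gᵀ A g > 0`, and `v* A^Z v` is real
because `A^Z` is Hermitian. -/

open scoped ComplexOrder

namespace Matrix

open RCLike

section Comparison

variable {n 𝕜 : Type*} [RCLike 𝕜] {A : Matrix n n ℝ} {B : Matrix n n 𝕜}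

lemma mul_norm_mul_norm_le_re_star_mul_mul (hdiag : ∀ i, A i i ≤ re (B i i))
    (hoff : ∀ i j, i ≠ j → ‖B i j‖ ≤ -A i j) (v : n → 𝕜) (i j : n) :
    ‖v i‖ * A i j * ‖v j‖ ≤ re (star (v i) * B i j * v j) := by
  obtain rfl | hij := eq_or_ne i j
  · have hsq : star (v i) * B i i * v i = ((‖v i‖ ^ 2 : ℝ) : 𝕜) * B i i := by
      rw [star_def, mul_right_comm, RCLike.conj_mul]; push_cast; ring
    rw [hsq, re_ofReal_mul]
    nlinarith [hdiag i, sq_nonneg ‖v i‖]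
  · calc ‖v i‖ * A i j * ‖v j‖ ≤ -(‖v i‖ * ‖B i j‖ * ‖v j‖) := by
          nlinarith [hoff i j hij, mul_nonneg (norm_nonneg (v i)) (norm_nonneg (v j))]
      _ = -‖star (v i) * B i j * v j‖ := by rw [norm_mul, norm_mul, norm_star]
      _ ≤ re (star (v i) * B i j * v j) := neg_le_of_abs_le (abs_re_le_norm _)

lemma norm_dotProduct_mulVec_le_re [Fintype n] (hdiag : ∀ i, A i i ≤ re (B i i))
    (hoff : ∀ i j, i ≠ j → ‖B i j‖ ≤ -A i j) (v : n → 𝕜) :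
    (fun i ↦ ‖v i‖) ⬝ᵥ (A *ᵥ fun i ↦ ‖v i‖) ≤ re (star v ⬝ᵥ (B *ᵥ v)) := by
  simp only [dotProduct, mulVec, Finset.mul_sum, map_sum, Pi.star_apply, ← mul_assoc]
  gcongr with i _ j _
  exact mul_norm_mul_norm_le_re_star_mul_mul hdiag hoff v i j

theorem PosDef.of_diag_le_re_of_norm_le_neg [Fintype n] (hA : A.PosDef) (hB : B.IsHermitian)
    (hdiag : ∀ i, A i i ≤ re (B i i)) (hoff : ∀ i j, i ≠ j → ‖B i j‖ ≤ -A i j) : B.PosDef := by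
  refine .of_dotProduct_mulVec_pos hB fun v hv ↦ pos_iff.mpr ⟨?_, hB.im_star_dotProduct_mulVec_self v⟩
  have hnorm : (fun i ↦ ‖v i‖) ≠ 0 := fun h ↦ hv <| funext fun i ↦ norm_eq_zero.mp (congrFun h i)
  have := hA.dotProduct_mulVec_pos hnorm
  rw [star_trivial] at this
  exact this.trans_le (norm_dotProduct_mulVec_le_re hdiag hoff v)

end Comparison

lemma isHermitian_diagonal_sub_hadamard {n 𝕜 : Type*} [RCLike 𝕜] [DecidableEq n] (d : n → ℝ)
    {C : Matrix n n ℝ} (hC : C.IsSymm) {Z : Matrix n n 𝕜} (hZ : Z.IsHermitian) :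
    (diagonal (fun i ↦ (d i : 𝕜)) - C.map (↑) ⊙ Z).IsHermitian := by
  have hofReal : Function.Semiconj ((↑) : ℝ → 𝕜) star star := fun r ↦ by simp
  refine .sub ?_ ((IsHermitian.map (isHermitian_iff_isSymm.mpr hC) _ hofReal).hadamard hZ)
  simpa [diagonal_map] using (isHermitian_diagonal d).map _ hofReal

end Matrix

open Matrix

theorem twisted_energy_posDef_general
    {X : Type*} [Fintype X] [DecidableEq X]
    (C : Matrix X X ℝ) (lam : X → ℝ)
    (hC0 : ∀ x y, 0 ≤ C x y) (hCsym : ∀ x y, C x y = C y x)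
    (A : Matrix X X ℝ) (hA : A = Matrix.diagonal lam - C) (hApd : A.PosDef)
    (Z : Matrix X X ℂ) (hZherm : Z.IsHermitian)
    (hZle : ∀ x y, ‖Z x y‖ ≤ 1)
    (AZ : Matrix X X ℂ)
    (hAZ : ∀ x y, AZ x y = (if x = y then (lam x : ℂ) else 0) - (C x y : ℂ) * Z x y) :
    AZ.PosDef := by
  have hAZ_eq : AZ = diagonal (fun x ↦ (lam x : ℂ)) - C.map (↑) ⊙ Z := by
    ext x y
    simp [hAZ, diagonal_apply]
  have hCZ (x y : X) : C x y * ‖Z x y‖ ≤ C x y := mul_le_of_le_one_right (hC0 x y) (hZle x y)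
  refine hApd.of_diag_le_re_of_norm_le_neg ?_ (fun x ↦ ?_) (fun x y hxy ↦ ?_)
  · exact hAZ_eq ▸ isHermitian_diagonal_sub_hadamard lam (IsSymm.ext fun x y ↦ hCsym y x) hZherm
  · have hCre := (mul_le_mul_of_nonneg_left (Complex.re_le_norm (Z x x)) (hC0 x x)).trans (hCZ x x)
    simp only [hA, hAZ, Matrix.sub_apply, diagonal_apply_eq, if_pos, RCLike.re_to_complex,
      Complex.sub_re, Complex.ofReal_re, Complex.re_ofReal_mul]
    linarith
  · simpa [hA, hAZ, hxy, abs_of_nonneg (hC0 x y)] using hCZ x y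

/-- If the energy matrix `A = diag(λ) - C` (with `C` symmetric,
nonnegative, zero-diagonal, `κ ≥ 0`, `λ_x = ∑_y C_{x,y} + κ_x`) is positive
definite, then for every Hermitian matrix `Z` with all entries of modulus at most `1`,
the twisted energy matrix `A^Z` with entries `A^Z_{x,y} = λ_x δ_{x,y} - C_{x,y} Z_{x,y}`
is positive definite. -/
theorem twisted_energy_posDef
    {X : Type*} [Fintype X] [DecidableEq X] [Nonempty X]
    (C : Matrix X X ℝ) (κ : X → ℝ) (lam : X → ℝ)
    (hlam : ∀ x, lam x = ∑ y, C x y + κ x)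
    (hC0 : ∀ x y, 0 ≤ C x y) (hCsym : ∀ x y, C x y = C y x)
    (hCdiag : ∀ x, C x x = 0) (hκ : ∀ x, 0 ≤ κ x)
    (A : Matrix X X ℝ) (hA : A = Matrix.diagonal lam - C) (hApd : A.PosDef)
    (Z : Matrix X X ℂ) (hZherm : Z.IsHermitian)
    (hZle : ∀ x y, ‖Z x y‖ ≤ 1)
    (AZ : Matrix X X ℂ)
    (hAZ : ∀ x y, AZ x y = (if x = y then (lam x : ℂ) else 0) - (C x y : ℂ) * Z x y) :
    AZ.PosDef :=
  twisted_energy_posDef_general C lam hC0 hCsym A hA hApd Z hZherm hZle AZ hAZ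
end

section
/- Let X and E be finite nonempty sets with |X| = m ≥ 2 and |E| = N, and let s, t : E → X with s(e) ≠ t(e) for every e (an oriented graph). Let B be the X-by-E incidence matrix over ℝ, \(B_{x,e} = \mathbf{1}[x = t(e)] - \mathbf{1}[x = s(e)]\), and assume B has rank m − 1 (the graph is connected), so that N − m + 1 ≥ 0; set r = N − m + 1. Let C : E → ℝ with \(C_e > 0\) for all e, and let \(L = B\, \mathrm{diag}(C)\, B^{T}\) be the weighted Laplacian. Fix \(x_0 \in X\) and let \(\hat L\) be the (m−1)-by-(m−1) matrix obtained from L by deleting the row and the column indexed by \(x_0\). Let D be an E-by-r real matrix with integer entries whose columns form a ℤ-basis of the abelian group \(\{ f \in \mathbb{Z}^{E} : B f = 0 \}\). Then \(\det\big( D^{T}\, \mathrm{diag}(C)^{-1}\, D \big) \cdot \prod_{e \in E} C_e \; = \; \det \hat L.\) -/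
open scoped Matrix

/-!
Let `Â` be the incidence matrix with the row of `x₀` deleted. Connectivity gives an integer right
inverse `S` of `Â`, and since the columns of `D` span `ker Â` over `ℤ`, the integer matrix
`P = [S | D]` is unimodular with `Â P = [1 | 0]`. Hence `M = Pᵀ diag(C)⁻¹ P` has determinant
`∏ₑ Cₑ⁻¹`, its inverse `P⁻¹ diag(C) P⁻ᵀ` has upper left block `Â diag(C) Âᵀ = L̂`, and its lower
right block is `Dᵀ diag(C)⁻¹ D`. Jacobi's complementary minor identity
`det (M⁻¹)₁₁ · det M = det M₂₂` is then the claim.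
-/

namespace Matrix

variable {R : Type*} {m k n : Type*} [Fintype n]

theorem map_intCast_mulVec_eq_zero_iff [Ring R] [CharZero R] (M : Matrix m n ℤ) (v : n → ℤ) :
    (M.map (Int.cast : ℤ → R) *ᵥ fun j => (v j : R)) = 0 ↔ M *ᵥ v = 0 := by
  simp only [funext_iff, Pi.zero_apply, ← Int.cast_eq_zero (α := R) (n := (M *ᵥ v) _)]
  simp [mulVec, dotProduct]

variable [Fintype m] [Fintype k] [DecidableEq m]

theorem mulVec_fromCols_surjective [Ring R] (A : Matrix m n R) (S : Matrix n m R) (D : Matrix n k R)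
    (hAS : A * S = 1) (hD : ∀ f, A *ᵥ f = 0 → ∃ c, D *ᵥ c = f) :
    Function.Surjective (fromCols S D).mulVec := by
  intro f
  obtain ⟨c, hc⟩ := hD (f - S *ᵥ (A *ᵥ f)) (by
    rw [mulVec_sub, mulVec_mulVec, hAS, one_mulVec, sub_self])
  exact ⟨Sum.elim (A *ᵥ f) c, by rw [fromCols_mulVec_sumElim, hc, add_sub_cancel]⟩

variable [CommRing R] [DecidableEq k]

theorem det_toBlocks₁₁_mul_det_eq_det_toBlocks₂₂ (M H : Matrix (m ⊕ k) (m ⊕ k) R)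
    (h : M * H = 1) : H.toBlocks₁₁.det * M.det = M.toBlocks₂₂.det := by
  rw [← fromBlocks_toBlocks M, ← fromBlocks_toBlocks H, fromBlocks_multiply, ← fromBlocks_one,
    fromBlocks_inj] at h
  have hM : M * fromBlocks H.toBlocks₁₁ 0 H.toBlocks₂₁ 1 =
      fromBlocks 1 M.toBlocks₁₂ 0 M.toBlocks₂₂ := by
    conv_lhs => rw [← fromBlocks_toBlocks M]
    rw [fromBlocks_multiply, h.1, h.2.2.1]
    simp
  simpa [det_fromBlocks_zero₁₂, det_fromBlocks_zero₂₁, mul_comm] using congrArg det hM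

variable [DecidableEq n]

theorem det_mul_mul_transpose_mul_det_eq_det_toCols₂ (A : Matrix m n R) (Γ Γ' : Matrix n n R)
    (hΓ : Γ' * Γ = 1) (P : Matrix n (m ⊕ k) R) (Q : Matrix (m ⊕ k) n R) (hPQ : P * Q = 1)
    (hQP : Q * P = 1) (hAP : A * P = fromCols 1 0) :
    (A * Γ * Aᵀ).det * (Pᵀ * Γ' * P).det = (P.toCols₂ᵀ * Γ' * P.toCols₂).det := by
  have hQA : Q.toRows₁ = A := by
    calc Q.toRows₁ = (fromCols 1 0 : Matrix m (m ⊕ k) R) * Q := by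
          conv_rhs => rw [← fromRows_toRows Q, fromCols_mul_fromRows]
          simp
      _ = A := by rw [← hAP, Matrix.mul_assoc, hPQ, Matrix.mul_one]
  have hMH : Pᵀ * Γ' * P * (Q * Γ * Qᵀ) = 1 := by
    calc Pᵀ * Γ' * P * (Q * Γ * Qᵀ) = Pᵀ * (Γ' * (P * Q) * Γ) * Qᵀ := by
          simp only [Matrix.mul_assoc]
      _ = 1 := by rw [hPQ, Matrix.mul_one, hΓ, Matrix.mul_one, ← transpose_mul, hQP, transpose_one]
  have h₁₁ : (Q * Γ * Qᵀ).toBlocks₁₁ = A * Γ * Aᵀ := by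
    rw [← hQA]; ext; simp [toBlocks₁₁, toRows₁, mul_apply]
  have h₂₂ : (Pᵀ * Γ' * P).toBlocks₂₂ = P.toCols₂ᵀ * Γ' * P.toCols₂ := by
    ext; simp [toBlocks₂₂, toCols₂, mul_apply]
  rw [← h₁₁, ← h₂₂]
  exact det_toBlocks₁₁_mul_det_eq_det_toBlocks₂₂ _ _ hMH

theorem det_map_intCast_transpose_mul_mul_eq {W : Type*} [Fintype W] [DecidableEq W]
    (P : Matrix n W ℤ) (Q : Matrix W n ℤ) (hPQ : P * Q = 1) (e : W ≃ n) (Γ : Matrix n n R) :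
    ((P.map (Int.cast : ℤ → R))ᵀ * Γ * P.map (Int.cast : ℤ → R)).det = Γ.det := by
  set P₀ := P.submatrix id e.symm
  have hP₀ : IsUnit P₀.det := isUnit_det_of_right_inverse (B := Q.submatrix e.symm id) (by
    rw [submatrix_mul_equiv, hPQ, submatrix_id_id])
  have hsub : ((P.map (Int.cast : ℤ → R))ᵀ * Γ * P.map (Int.cast : ℤ → R)).submatrix e.symm e.symm =
      (P₀.map (Int.cast : ℤ → R))ᵀ * Γ * P₀.map (Int.cast : ℤ → R) := by
    ext; simp [P₀, mul_apply]
  rw [← det_submatrix_equiv_self e.symm, hsub, det_mul, det_mul, det_transpose, ← Int.cast_det,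
    mul_right_comm, ← Int.cast_mul, Int.isUnit_mul_self hP₀, Int.cast_one, one_mul]

theorem det_toCols₂_transpose_mul_diagonal_inv_mul_mul_prod_eq {K : Type*} [Field K]
    (A : Matrix m n ℤ) (P : Matrix n (m ⊕ k) ℤ) (hAP : A * P = fromCols 1 0)
    (hP : Function.Surjective P.mulVec) (e : m ⊕ k ≃ n) (C : n → K) (hC : ∀ i, C i ≠ 0) :
    ((P.toCols₂.map (Int.cast : ℤ → K))ᵀ * diagonal (fun i => (C i)⁻¹) *
        P.toCols₂.map (Int.cast : ℤ → K)).det * ∏ i, C i =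
      (A.map (Int.cast : ℤ → K) * diagonal C * (A.map (Int.cast : ℤ → K))ᵀ).det := by
  obtain ⟨Q, hPQ⟩ := mulVec_surjective_iff_exists_right_inverse.mp hP
  have hQP := (mul_eq_one_comm_of_equiv e.symm).mp hPQ
  have hC' : diagonal (fun i => (C i)⁻¹) * diagonal C = 1 := by
    rw [diagonal_mul_diagonal, ← diagonal_one]
    exact congrArg diagonal (funext fun i => inv_mul_cancel₀ (hC i))
  have key := det_mul_mul_transpose_mul_det_eq_det_toCols₂ (A.map (Int.castRingHom K)) _ _ hC'
    (P.map (Int.castRingHom K)) (Q.map (Int.castRingHom K))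
    (by rw [← Matrix.map_mul, hPQ]; simp) (by rw [← Matrix.map_mul, hQP]; simp)
    (by rw [← Matrix.map_mul, hAP]; simp [fromCols_map])
  have key' : (A.map (Int.cast : ℤ → K) * diagonal C * (A.map (Int.cast : ℤ → K))ᵀ).det *
      (diagonal fun i => (C i)⁻¹).det = ((P.toCols₂.map (Int.cast : ℤ → K))ᵀ *
        diagonal (fun i => (C i)⁻¹) * P.toCols₂.map (Int.cast : ℤ → K)).det := by
    rw [← det_map_intCast_transpose_mul_mul_eq P Q hPQ e]
    exact key
  rw [← key', det_diagonal, mul_assoc, ← Finset.prod_mul_distrib]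
  simp [hC]

end Matrix

section Incidence

open Matrix

variable {X E : Type*} [DecidableEq X] (s t : E → X)

def incidenceMatrix (R : Type*) [Ring R] : Matrix X E R :=
  of fun x e => (if x = t e then 1 else 0) - (if x = s e then 1 else 0)

variable {s t} {R : Type*} [Ring R]

theorem incidenceMatrix_intCast :
    (incidenceMatrix s t ℤ).map (Int.cast : ℤ → R) = incidenceMatrix s t R := by
  ext; simp [incidenceMatrix, apply_ite (Int.cast : ℤ → R)]

theorem incidenceMatrix_mulVec_single [Fintype E] [DecidableEq E] (e : E) :
    incidenceMatrix s t R *ᵥ Pi.single e 1 = Pi.single (t e) 1 - Pi.single (s e) 1 := by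
  ext x; simp [incidenceMatrix, Pi.single_apply]

theorem incidenceMatrix_transpose_mulVec_eq_zero [Fintype X] {v : X → R}
    (hv : ∀ e, v (t e) = v (s e)) : (incidenceMatrix s t R)ᵀ *ᵥ v = 0 := by
  ext e; simp [incidenceMatrix, mulVec, dotProduct, sub_mul, Finset.sum_sub_distrib, hv]

variable [Fintype X] [Fintype E]

theorem sum_incidenceMatrix_mulVec (f : E → R) : ∑ x, (incidenceMatrix s t R *ᵥ f) x = 0 := by
  simp only [mulVec, dotProduct]
  rw [Finset.sum_comm]
  simp [incidenceMatrix, sub_mul, Finset.sum_sub_distrib]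

theorem submatrix_incidenceMatrix_mulVec_eq_zero_iff {f : E → R} (x₀ : X) :
    (incidenceMatrix s t R).submatrix (Subtype.val : {x // x ≠ x₀} → X) id *ᵥ f = 0 ↔
      incidenceMatrix s t R *ᵥ f = 0 := by
  refine ⟨fun hf => ?_, fun hf => funext fun x => congrFun hf x⟩
  have hx : ∀ x ≠ x₀, (incidenceMatrix s t R *ᵥ f) x = 0 := fun x hx => congrFun hf ⟨x, hx⟩
  have hx₀ := sum_incidenceMatrix_mulVec (s := s) (t := t) f
  rw [Finset.sum_eq_single x₀ (fun x _ => hx x) (by simp)] at hx₀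
  ext x
  obtain rfl | hne := eq_or_ne x x₀
  · exact hx₀
  · exact hx x hne

theorem eq_of_rank_incidenceMatrix {K : Type*} [Field K]
    (hrank : (incidenceMatrix s t K).rank = Fintype.card X - 1) {v : X → K}
    (hv : ∀ e, v (t e) = v (s e)) (x y : X) : v x = v y := by
  -- `ker Bᵀ` is one-dimensional and contains the constants.
  set φ := (incidenceMatrix s t K)ᵀ.mulVecLin
  have hker : Module.finrank K (LinearMap.ker φ) = 1 := by
    have := LinearMap.finrank_range_add_finrank_ker φ
    have hpos : 0 < Fintype.card X := Fintype.card_pos_iff.mpr ⟨x⟩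
    rw [range_mulVecLin, ← rank_eq_finrank_span_cols, rank_transpose, hrank,
      Module.finrank_fintype_fun_eq_card] at this
    omega
  have h1 : (1 : X → K) ∈ LinearMap.ker φ :=
    incidenceMatrix_transpose_mulVec_eq_zero fun _ => rfl
  obtain ⟨c, hc⟩ := (finrank_eq_one_iff_of_nonzero' (⟨1, h1⟩ : LinearMap.ker φ)
    fun h => one_ne_zero (congrFun (congrArg Subtype.val h) x)).mp hker
    ⟨v, incidenceMatrix_transpose_mulVec_eq_zero hv⟩
  have hv' : v = c • 1 := congrArg Subtype.val hc.symm
  simp [hv']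

theorem single_sub_single_mem_range_incidenceMatrix {K : Type*} [Field K]
    (hrank : (incidenceMatrix s t K).rank = Fintype.card X - 1) (x x₀ : X) :
    Pi.single x 1 - Pi.single x₀ 1 ∈ LinearMap.range (incidenceMatrix s t ℤ).mulVecLin := by
  -- The indicator of the vertices `y` with `eᵧ - eₓ₀` in the range is constant along edges.
  classical
  set V := LinearMap.range (incidenceMatrix s t ℤ).mulVecLin
  set S : X → Prop := fun y => Pi.single y 1 - Pi.single x₀ 1 ∈ V
  have hedge (e : E) : S (t e) ↔ S (s e) := by
    have hcol : Pi.single (t e) 1 - Pi.single (s e) 1 ∈ V :=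
      ⟨Pi.single e 1, incidenceMatrix_mulVec_single e⟩
    have := V.add_mem_iff_right (y := Pi.single (s e) 1 - Pi.single x₀ 1) hcol
    rwa [sub_add_sub_cancel] at this
  have hS := eq_of_rank_incidenceMatrix hrank (v := fun y => if S y then (1 : K) else 0)
    (fun e => by simp only [hedge e]) x x₀
  have hx₀ : S x₀ := by simp only [S, sub_self, zero_mem]
  by_contra h
  rw [if_pos hx₀, if_neg h] at hS
  exact zero_ne_one hS

theorem exists_submatrix_incidenceMatrix_mul_eq_one {K : Type*} [Field K]
    (hrank : (incidenceMatrix s t K).rank = Fintype.card X - 1) (x₀ : X) :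
    ∃ S : Matrix E {x // x ≠ x₀} ℤ,
      (incidenceMatrix s t ℤ).submatrix (Subtype.val : {x // x ≠ x₀} → X) id * S = 1 := by
  choose f hf using fun x : {x // x ≠ x₀} => single_sub_single_mem_range_incidenceMatrix hrank x x₀
  refine ⟨of fun e x => f x e, ?_⟩
  ext x y
  simpa [mul_apply, mulVec, dotProduct, Pi.single_apply, one_apply, x.2, Subtype.ext_iff]
    using congrFun (hf y) x

end Incidence

theorem jacobian_torus_volume_identity_general
    {X E : Type*} [Fintype X] [DecidableEq X]
    [Fintype E] [DecidableEq E]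
    (s t : E → X)
    (B : Matrix X E ℝ)
    (hB : ∀ x e, B x e = (if x = t e then (1 : ℝ) else 0) - (if x = s e then 1 else 0))
    (hrank : B.rank = Fintype.card X - 1)
    (C : E → ℝ) (hC : ∀ e, 0 < C e)
    (L : Matrix X X ℝ) (hL : L = B * Matrix.diagonal C * B.transpose)
    (x0 : X)
    (r : ℕ) (hr : r = Fintype.card E + 1 - Fintype.card X)
    (D : Matrix E (Fin r) ℤ)
    (hker : ∀ i, (B *ᵥ fun e => ((D e i : ℤ) : ℝ)) = 0)
    (hbasis : ∀ f : E → ℤ, (B *ᵥ fun e => ((f e : ℤ) : ℝ)) = 0 →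
      ∃! c : Fin r → ℤ, ∀ e, f e = ∑ i, D e i * c i) :
    ((D.map (fun n : ℤ => (n : ℝ))).transpose * Matrix.diagonal (fun e => (C e)⁻¹) *
        D.map (fun n : ℤ => (n : ℝ))).det * ∏ e, C e
      = (L.submatrix (fun i : {x : X // x ≠ x0} => (i : X))
          (fun j : {x : X // x ≠ x0} => (j : X))).det := by
  obtain rfl : B = incidenceMatrix s t ℝ := Matrix.ext hB
  rw [← incidenceMatrix_intCast] at hker hbasis hL
  set A := (incidenceMatrix s t ℤ).submatrix (Subtype.val : {x // x ≠ x0} → X) id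
  obtain ⟨S, hAS⟩ := exists_submatrix_incidenceMatrix_mul_eq_one hrank x0
  have hAD : A * D = 0 := by
    ext x i
    exact congrFun ((submatrix_incidenceMatrix_mulVec_eq_zero_iff x0).mpr
      ((Matrix.map_intCast_mulVec_eq_zero_iff _ _).mp (hker i))) x
  have hspan : ∀ f, A *ᵥ f = 0 → ∃ c, D *ᵥ c = f := fun f hf => by
    obtain ⟨c, hc, -⟩ := hbasis f ((Matrix.map_intCast_mulVec_eq_zero_iff _ _).mpr
      ((submatrix_incidenceMatrix_mulVec_eq_zero_iff x0).mp hf))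
    exact ⟨c, funext fun e => (hc e).symm⟩
  have hcard : Fintype.card ({x // x ≠ x0} ⊕ Fin r) = Fintype.card E := by
    have := (incidenceMatrix s t ℝ).rank_le_card_width
    have := Fintype.card_pos_iff.mpr ⟨x0⟩
    simp only [ne_eq, hr, Fintype.card_sum, Fintype.card_subtype_compl, Fintype.card_unique,
      Fintype.card_fin]
    omega
  have hLhat : L.submatrix (fun i : {x : X // x ≠ x0} => (i : X))
      (fun j : {x : X // x ≠ x0} => (j : X)) =
      A.map (Int.cast : ℤ → ℝ) * Matrix.diagonal C * (A.map (Int.cast : ℤ → ℝ))ᵀ := by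
    rw [hL]; ext; simp [Matrix.mul_apply, A]
  rw [hLhat]
  simpa using Matrix.det_toCols₂_transpose_mul_diagonal_inv_mul_mul_prod_eq A (Matrix.fromCols S D)
    (by rw [Matrix.mul_fromCols, hAS, hAD]) (Matrix.mulVec_fromCols_surjective A S D hAS hspan)
    (Fintype.equivOfCardEq hcard) C (fun e => (hC e).ne')

/-- For a connected weighted oriented graph with vertex set `X`
(`|X| = m ≥ 2`), edge set `E` (`|E| = N`), incidence matrix `B` of rank `m - 1`,
positive conductances `C`, weighted Laplacian `L = B diag(C) Bᵀ`, and an integer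
matrix `D` whose columns form a `ℤ`-basis of the lattice `{f ∈ ℤ^E : Bf = 0}` (of
rank `r = N - m + 1`), one has
`det(Dᵀ diag(C)⁻¹ D) · ∏ₑ Cₑ = det L̂`, where `L̂` is `L` with the row and column of
a fixed vertex `x₀` removed. -/
theorem jacobian_torus_volume_identity
    {X E : Type*} [Fintype X] [DecidableEq X] [Nonempty X]
    [Fintype E] [DecidableEq E] [Nonempty E]
    (hm : 2 ≤ Fintype.card X)
    (s t : E → X) (hst : ∀ e, s e ≠ t e)
    (B : Matrix X E ℝ)
    (hB : ∀ x e, B x e = (if x = t e then (1 : ℝ) else 0) - (if x = s e then 1 else 0))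
    (hrank : B.rank = Fintype.card X - 1)
    (C : E → ℝ) (hC : ∀ e, 0 < C e)
    (L : Matrix X X ℝ) (hL : L = B * Matrix.diagonal C * B.transpose)
    (x0 : X)
    (r : ℕ) (hr : r = Fintype.card E + 1 - Fintype.card X)
    (D : Matrix E (Fin r) ℤ)
    (hker : ∀ i, (B *ᵥ fun e => ((D e i : ℤ) : ℝ)) = 0)
    (hbasis : ∀ f : E → ℤ, (B *ᵥ fun e => ((f e : ℤ) : ℝ)) = 0 →
      ∃! c : Fin r → ℤ, ∀ e, f e = ∑ i, D e i * c i) :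
    ((D.map (fun n : ℤ => (n : ℝ))).transpose * Matrix.diagonal (fun e => (C e)⁻¹) *
        D.map (fun n : ℤ => (n : ℝ))).det * ∏ e, C e
      = (L.submatrix (fun i : {x : X // x ≠ x0} => (i : X))
          (fun j : {x : X // x ≠ x0} => (j : X))).det :=
  jacobian_torus_volume_identity_general s t B hB hrank C hC L hL x0 r hr D hker hbasis
end
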